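/- arXiv:1910.04897 — 6 statements merged into one kernel-verified Lean document; each statement's English description precedes it below -/
import Mathlib

section
/- Let R = k[t_1, ..., t_n] be a polynomial ring over a field k of characteristic p > 0, and let ∂ be the derivation determined by ∂(t_i) = t_i^2 for all i. Then ∂^p = 0 on R. -/
open MvPolynomial Finset

private lemma iter_add {R A : Type*} [CommRing R] [CommRing A] [Algebra R A]
    (d : Derivation R A A) (m : ℕ) (a b : A) :
    (⇑d)^[m] (a + b) = (⇑d)^[m] a + (⇑d)^[m] b := by
  induction m generalizing a b with
  | zero => simp
  | succ m ih => simp [Function.iterate_succ_apply, map_add, ih]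

private lemma iter_leibniz {R A : Type*} [CommRing R] [CommRing A] [Algebra R A]
    (d : Derivation R A A) (m : ℕ) (a b : A) :
    (⇑d)^[m] (a * b) =
      ∑ j ∈ range (m + 1), m.choose j • ((⇑d)^[j] a * (⇑d)^[m - j] b) := by
  induction m generalizing a b with
  | zero => simp
  | succ m ih =>
    rw [Function.iterate_succ_apply, d.leibniz]
    have h1 : (⇑d)^[m] (a • d b) = ∑ j ∈ range (m + 1),
        m.choose j • ((⇑d)^[j] a * (⇑d)^[m + 1 - j] b) := by
      rw [smul_eq_mul, ih]
      refine Finset.sum_congr rfl fun j hj => ?_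
      rw [mem_range] at hj
      rw [show m + 1 - j = (m - j) + 1 by omega, Function.iterate_succ_apply]
    have h2 : (⇑d)^[m] (b • d a) = ∑ j ∈ range (m + 1),
        m.choose j • ((⇑d)^[m + 1 - j] a * (⇑d)^[j] b) := by
      rw [smul_eq_mul, ih]
      refine Finset.sum_congr rfl fun j hj => ?_
      rw [mem_range] at hj
      rw [show m + 1 - j = (m - j) + 1 by omega, Function.iterate_succ_apply, mul_comm]
    rw [iter_add, h1, h2]
    have hreix : ∑ j ∈ range (m + 1), m.choose j • ((⇑d)^[m + 1 - j] a * (⇑d)^[j] b)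
        = ∑ i ∈ Ico 1 (m + 2), m.choose (m + 1 - i) • ((⇑d)^[i] a * (⇑d)^[m + 1 - i] b) := by
      refine Finset.sum_nbij' (fun j => m + 1 - j) (fun i => m + 1 - i)
        (fun j hj => by rw [mem_range] at hj; rw [mem_Ico]; omega)
        (fun i hi => by rw [mem_Ico] at hi; rw [mem_range]; omega)
        (fun j hj => by rw [mem_range] at hj; omega)
        (fun i hi => by rw [mem_Ico] at hi; omega)
        (fun j hj => ?_)
      rw [mem_range] at hj
      rw [show m + 1 - (m + 1 - j) = j by omega]
    rw [hreix]
    rw [show range (m + 2) = insert 0 (Ico 1 (m + 2)) by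
      rw [Finset.range_eq_Ico]; exact (Finset.insert_Ico_succ_left_eq_Ico (by omega)).symm]
    rw [Finset.sum_insert (by simp)]
    rw [show range (m + 1) = insert 0 (Ico 1 (m + 1)) by
      rw [Finset.range_eq_Ico]; exact (Finset.insert_Ico_succ_left_eq_Ico (by omega)).symm]
    rw [Finset.sum_insert (by simp)]
    rw [show Ico 1 (m + 2) = insert (m + 1) (Ico 1 (m + 1)) by
      exact Nat.Ico_succ_right_eq_insert_Ico (by omega)]
    rw [Finset.sum_insert (by simp), Finset.sum_insert (by simp)]
    have key : ∀ j ∈ Ico 1 (m + 1),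
        m.choose j • ((⇑d)^[j] a * (⇑d)^[m + 1 - j] b)
          + m.choose (m + 1 - j) • ((⇑d)^[j] a * (⇑d)^[m + 1 - j] b)
        = (m + 1).choose j • ((⇑d)^[j] a * (⇑d)^[m + 1 - j] b) := by
      intro j hj
      rw [mem_Ico] at hj
      rw [← add_smul]
      congr 1
      rw [show m + 1 - j = m - (j - 1) by omega,
        Nat.choose_symm (by omega),
        show (m + 1).choose j = (m + 1).choose ((j - 1) + 1) by congr 1; omega,
        Nat.choose_succ_succ, Nat.succ_eq_add_one, show j - 1 + 1 = j by omega, Nat.add_comm]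
    have hS : (∑ j ∈ Ico 1 (m + 1), m.choose j • ((⇑d)^[j] a * (⇑d)^[m + 1 - j] b))
        + (∑ j ∈ Ico 1 (m + 1), m.choose (m + 1 - j) • ((⇑d)^[j] a * (⇑d)^[m + 1 - j] b))
        = ∑ j ∈ Ico 1 (m + 1), (m + 1).choose j • ((⇑d)^[j] a * (⇑d)^[m + 1 - j] b) := by
      rw [← Finset.sum_add_distrib]
      exact Finset.sum_congr rfl key
    simp only [Nat.choose_zero_right, Nat.choose_self, Nat.sub_zero, Nat.sub_self,
      show m + 1 - (m + 1) = 0 by omega, one_smul, Function.iterate_zero_apply]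
    linear_combination hS

theorem stmt_4 {k : Type*} [Field k] (p n : ℕ) [Fact p.Prime] [CharP k p]
    (d : Derivation k (MvPolynomial (Fin n) k) (MvPolynomial (Fin n) k))
    (hX : ∀ i : Fin n, d (X i) = X i ^ 2) :
    ∀ f : MvPolynomial (Fin n) k, (⇑d)^[p] f = 0 := by
  have hp : p.Prime := Fact.out
  have hp0 : 0 < p := hp.pos
  -- d^[p] of a product
  have hmul : ∀ a b : MvPolynomial (Fin n) k,
      (⇑d)^[p] (a * b) = (⇑d)^[p] a * b + a * (⇑d)^[p] b := by
    intro a b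
    rw [iter_leibniz]
    rw [show range (p + 1) = insert 0 (insert p (Ico 1 p)) by
      rw [show insert p (Ico 1 p) = Ico 1 (p + 1) from
        (Nat.Ico_succ_right_eq_insert_Ico (by omega)).symm, Finset.range_eq_Ico]
      exact (Finset.insert_Ico_succ_left_eq_Ico (by omega)).symm]
    rw [Finset.sum_insert (by simp only [mem_insert, mem_Ico]; omega), Finset.sum_insert (by simp)]
    have hmid : ∑ j ∈ Ico 1 p, p.choose j • ((⇑d)^[j] a * (⇑d)^[p - j] b) = 0 := by
      refine Finset.sum_eq_zero fun j hj => ?_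
      rw [mem_Ico] at hj
      have hdvd : (p : ℕ) ∣ p.choose j := hp.dvd_choose_self (by omega) (by omega)
      obtain ⟨c, hc⟩ := hdvd
      rw [hc, mul_smul, nsmul_eq_mul]
      have : ((p : ℕ) : MvPolynomial (Fin n) k) = 0 := by
        exact_mod_cast CharP.cast_eq_zero (MvPolynomial (Fin n) k) p
      rw [this, zero_mul]
    rw [hmid, add_zero, Nat.choose_zero_right, Nat.choose_self, one_smul, one_smul,
      Nat.sub_zero, Nat.sub_self]
    simp only [Function.iterate_zero_apply]
    ring
  -- d^[m] (X i) = m ! • X i ^ (m + 1)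
  have hXiter : ∀ (m : ℕ) (i : Fin n),
      (⇑d)^[m] (X i) = (Nat.factorial m : ℕ) • (X i : MvPolynomial (Fin n) k) ^ (m + 1) := by
    intro m i
    induction m with
    | zero => simp
    | succ m ih =>
      rw [Function.iterate_succ_apply', ih, map_nsmul, Derivation.leibniz_pow, hX,
        Nat.add_sub_cancel, smul_eq_mul, ← pow_add, smul_smul,
        show Nat.factorial m * (m + 1) = Nat.factorial (m + 1) by rw [Nat.factorial_succ]; ring,
        show m + (1 + 1) = m + 1 + 1 by ring]
  -- d^[p] (X i) = 0
  have hXp : ∀ i : Fin n, (⇑d)^[p] (X i) = 0 := by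
    intro i
    rw [hXiter p i, nsmul_eq_mul]
    have : ((Nat.factorial p : ℕ) : MvPolynomial (Fin n) k) = 0 := by
      have hdvd : p ∣ Nat.factorial p := Nat.dvd_factorial hp0 le_rfl
      obtain ⟨c, hc⟩ := hdvd
      rw [hc]; push_cast
      rw [show ((p : ℕ) : MvPolynomial (Fin n) k) = 0 from by
        exact_mod_cast CharP.cast_eq_zero (MvPolynomial (Fin n) k) p, zero_mul]
    rw [this, zero_mul]
  -- constants
  have hC : ∀ a : k, (⇑d)^[p] (C a : MvPolynomial (Fin n) k) = 0 := by
    intro a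
    obtain ⟨q, hq⟩ := Nat.exists_eq_succ_of_ne_zero hp0.ne'
    rw [hq, Function.iterate_succ_apply]
    have : d (C a : MvPolynomial (Fin n) k) = 0 := by
      rw [show (C a : MvPolynomial (Fin n) k) = algebraMap k _ a from rfl]
      exact d.map_algebraMap a
    rw [this]
    clear hq
    induction q with
    | zero => simp
    | succ q ih => rw [Function.iterate_succ_apply, map_zero]; exact ih
  intro f
  induction f using MvPolynomial.induction_on with
  | C a => exact hC a
  | add f g hf hg => rw [iter_add, hf, hg, add_zero]
  | mul_X f i hf => rw [hmul, hf, hXp i, zero_mul, mul_zero, add_zero]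
end

section
/- Let R = k[t_1, ..., t_n] with the derivation ∂ given by ∂(t_i) = t_i^2, and let E_i denote the i-th elementary symmetric polynomial in t_1, ..., t_n (with E_0 = 1 and E_{n+1} = 0). Then ∂(E_i) = E_1 · E_i − (i+1) · E_{i+1} for all 1 ≤ i ≤ n; in particular ∂(E_n) = E_1 · E_n. -/
open MvPolynomial

private lemma dprod_aux {k : Type*} [CommRing k] (n : ℕ)
    (d : Derivation k (MvPolynomial (Fin n) k) (MvPolynomial (Fin n) k))
    (hX : ∀ i : Fin n, d (X i) = X i ^ 2) (s : Finset (Fin n)) :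
    d (∏ j ∈ s, X j) = ∑ j ∈ s, X j * ∏ l ∈ s, X l := by
  classical
  induction s using Finset.induction with
  | empty => simp
  | @insert a s ha ih =>
    rw [Finset.prod_insert ha, Derivation.leibniz, ih, hX, Finset.sum_insert ha]
    simp only [smul_eq_mul, Finset.mul_sum, Finset.prod_insert ha]
    rw [Finset.sum_congr rfl (fun j (_ : j ∈ s) =>
      show X a * (X j * ∏ l ∈ s, X l) = X j * (X a * ∏ l ∈ s, X l) by ring)]
    ring

private lemma count_aux {k : Type*} [CommRing k] (n : ℕ) (i : ℕ) :
    ∑ s ∈ Finset.powersetCard i (Finset.univ : Finset (Fin n)),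
        ∑ j ∈ sᶜ, X j * ∏ l ∈ s, X l =
      ((i : MvPolynomial (Fin n) k) + 1) * esymm (Fin n) k (i + 1) := by
  classical
  have key : ∑ s ∈ Finset.powersetCard i (Finset.univ : Finset (Fin n)),
        ∑ j ∈ sᶜ, X j * ∏ l ∈ s, X l =
      ∑ t ∈ Finset.powersetCard (i + 1) (Finset.univ : Finset (Fin n)),
        ∑ j ∈ t, (∏ l ∈ t, X l : MvPolynomial (Fin n) k) := by
    rw [Finset.sum_sigma', Finset.sum_sigma']
    refine Finset.sum_nbij' (fun p => ⟨insert p.2 p.1, p.2⟩)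
      (fun p => ⟨p.1.erase p.2, p.2⟩) ?_ ?_ ?_ ?_ ?_
    · rintro ⟨s, j⟩ hp
      simp only [Finset.mem_sigma, Finset.mem_powersetCard_univ, Finset.mem_compl] at hp
      simp only [Finset.mem_sigma, Finset.mem_powersetCard_univ]
      exact ⟨by rw [Finset.card_insert_of_notMem hp.2, hp.1], Finset.mem_insert_self _ _⟩
    · rintro ⟨t, j⟩ hp
      simp only [Finset.mem_sigma, Finset.mem_powersetCard_univ, Finset.mem_compl] at hp ⊢
      exact ⟨by rw [Finset.card_erase_of_mem hp.2, hp.1]; rfl, Finset.notMem_erase _ _⟩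
    · rintro ⟨s, j⟩ hp
      simp only [Finset.mem_sigma, Finset.mem_powersetCard_univ, Finset.mem_compl] at hp
      simp [Finset.erase_insert hp.2]
    · rintro ⟨t, j⟩ hp
      simp only [Finset.mem_sigma, Finset.mem_powersetCard_univ] at hp
      simp [Finset.insert_erase hp.2]
    · rintro ⟨s, j⟩ hp
      simp only [Finset.mem_sigma, Finset.mem_powersetCard_univ, Finset.mem_compl] at hp
      simp [Finset.prod_insert hp.2]
  rw [key, esymm, Finset.mul_sum]
  refine Finset.sum_congr rfl fun t ht => ?_
  rw [Finset.mem_powersetCard_univ] at ht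
  rw [Finset.sum_const, ht, nsmul_eq_mul]
  push_cast
  ring

theorem stmt_5 {k : Type*} [CommRing k] (n : ℕ)
    (d : Derivation k (MvPolynomial (Fin n) k) (MvPolynomial (Fin n) k))
    (hX : ∀ i : Fin n, d (X i) = X i ^ 2) :
    ∀ i : ℕ, 1 ≤ i → i ≤ n →
      d (esymm (Fin n) k i) =
        esymm (Fin n) k 1 * esymm (Fin n) k i
          - ((i : MvPolynomial (Fin n) k) + 1) * esymm (Fin n) k (i + 1) := by
  classical
  intro i _ _
  have h1 : d (esymm (Fin n) k i) =
      ∑ s ∈ Finset.powersetCard i (Finset.univ : Finset (Fin n)),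
        ∑ j ∈ s, X j * ∏ l ∈ s, X l := by
    rw [esymm, map_sum]
    exact Finset.sum_congr rfl fun s _ => dprod_aux n d hX s
  have h2 : esymm (Fin n) k 1 * esymm (Fin n) k i =
      ∑ s ∈ Finset.powersetCard i (Finset.univ : Finset (Fin n)),
        ((∑ j ∈ s, X j * ∏ l ∈ s, X l) + ∑ j ∈ sᶜ, X j * ∏ l ∈ s, X l) := by
    rw [esymm_one, esymm, Finset.sum_mul_sum]
    refine Finset.sum_comm.trans (Finset.sum_congr rfl fun s _ => ?_)
    rw [← Finset.sum_add_sum_compl s fun j => X j * ∏ l ∈ s, X l]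
  rw [h1, h2, Finset.sum_add_distrib, count_aux]
  ring
end

section
/- Let R = k[t_1, ..., t_n][s] and consider the generating function G = ∏_{i=1}^n (1 + t_i s) = Σ_{i=0}^n E_i s^i, where E_i are the elementary symmetric polynomials. If ∂ is the derivation of k[t_1,...,t_n] with ∂(t_i) = t_i^2, extended to R with ∂(s) = 0, then ∂(G) = E_1 · G − dG/ds, where dG/ds is the formal derivative in s. -/
open MvPolynomial Polynomial

lemma deriv_prod {k A : Type*} [CommRing k] [CommRing A] [Algebra k A]
    (D : Derivation k A A) {ι : Type*} [DecidableEq ι] (s : Finset ι) (f : ι → A) :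
    D (∏ i ∈ s, f i) = ∑ i ∈ s, (∏ j ∈ s.erase i, f j) * D (f i) := by
  induction s using Finset.induction_on with
  | empty => simp
  | insert a s hi ih =>
    rw [Finset.prod_insert hi, D.leibniz, ih, smul_eq_mul, smul_eq_mul, Finset.mul_sum,
      Finset.sum_insert hi, Finset.erase_insert hi, add_comm]
    congr 1
    apply Finset.sum_congr rfl
    intro j hj
    rw [← mul_assoc]
    congr 1
    rw [Finset.erase_insert_of_ne (by rintro rfl; exact hi hj),
      Finset.prod_insert (fun h => hi (Finset.mem_of_mem_erase h))]

theorem stmt_6 {k : Type*} [CommRing k] (n : ℕ)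
    (d : Derivation k (MvPolynomial (Fin n) k) (MvPolynomial (Fin n) k))
    (hd : ∀ i : Fin n, d (MvPolynomial.X i) = MvPolynomial.X i ^ 2)
    (D : Derivation k (Polynomial (MvPolynomial (Fin n) k))
        (Polynomial (MvPolynomial (Fin n) k)))
    (hDs : D Polynomial.X = 0)
    (hDC : ∀ a : MvPolynomial (Fin n) k, D (Polynomial.C a) = Polynomial.C (d a)) :
    D (∏ i : Fin n, (1 + Polynomial.C (MvPolynomial.X i) * Polynomial.X)) =
      Polynomial.C (esymm (Fin n) k 1) *
          (∏ i : Fin n, (1 + Polynomial.C (MvPolynomial.X i) * Polynomial.X)) -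
        Polynomial.derivative
          (∏ i : Fin n, (1 + Polynomial.C (MvPolynomial.X i) * Polynomial.X)) := by
  have hderiv : Polynomial.derivative
      (∏ i : Fin n, (1 + Polynomial.C (MvPolynomial.X i) * Polynomial.X)) =
      ∑ i : Fin n, (∏ j ∈ Finset.univ.erase i,
        (1 + Polynomial.C (MvPolynomial.X j : MvPolynomial (Fin n) k) * Polynomial.X)) *
        Polynomial.C (MvPolynomial.X i) := by
    rw [← Polynomial.mkDerivation_one_eq_derivative,
      deriv_prod (Polynomial.mkDerivation (MvPolynomial (Fin n) k)
        (1 : Polynomial (MvPolynomial (Fin n) k)))]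
    apply Finset.sum_congr rfl
    intro i _
    congr 1
    rw [Polynomial.mkDerivation_one_eq_derivative]
    simp
  rw [deriv_prod D, hderiv, esymm_one, map_sum, Finset.sum_mul, ← Finset.sum_sub_distrib]
  apply Finset.sum_congr rfl
  intro i _
  have h1 : D (1 + Polynomial.C (MvPolynomial.X i) * Polynomial.X) =
      Polynomial.C (MvPolynomial.X i ^ 2) * Polynomial.X := by
    rw [map_add, D.map_one_eq_zero, zero_add, D.leibniz, hDs, hDC, hd]
    simp [mul_comm]
  rw [h1, ← Finset.mul_prod_erase Finset.univ _ (Finset.mem_univ i)]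
  push_cast [map_pow]
  ring
end

section
/- The derivation ∂ of R = k[t_1, ..., t_n] (char k = p > 0) given by ∂(t_i) = t_i^2 restricts to a derivation of the subring of symmetric polynomials R^{S_n}, and satisfies ∂^p = 0 on R^{S_n}. That is, (R^{S_n}, ∂) is a p-DG algebra. -/
open MvPolynomial Finset

section Aux

variable {k : Type*} [Field k] {n : ℕ}
variable (d : Derivation k (MvPolynomial (Fin n) k) (MvPolynomial (Fin n) k))

/-- The derivation commutes with `rename σ`. -/
lemma aux_d_rename (hX : ∀ i : Fin n, d (X i) = X i ^ 2) (σ : Fin n → Fin n)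
    (f : MvPolynomial (Fin n) k) : d (rename σ f) = rename σ (d f) := by
  induction f using MvPolynomial.induction_on with
  | C a =>
      have h : d (MvPolynomial.C (σ := Fin n) a) = 0 := by
        rw [← MvPolynomial.algebraMap_eq]; exact d.map_algebraMap a
      simp [h]
  | add f g hf hg => simp [map_add, hf, hg]
  | mul_X f i hf =>
      simp only [map_mul, rename_X, Derivation.leibniz, smul_eq_mul, hX, hf, map_add,
        map_pow]

/-- General Leibniz rule for iterates of the derivation. -/
lemma aux_iterate_leibniz (m : ℕ) (a b : MvPolynomial (Fin n) k) :
    (⇑d)^[m] (a * b) =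
      ∑ j ∈ range m.succ, (m.choose j • ((⇑d)^[m - j] a * (⇑d)^[j] b)) := by
  induction m with
  | zero => simp [Finset.range]
  | succ m IH =>
    calc
      (⇑d)^[m + 1] (a * b) =
          d (∑ j ∈ range m.succ,
              m.choose j • ((⇑d)^[m - j] a * (⇑d)^[j] b)) := by
        rw [Function.iterate_succ_apply', IH]
      _ = (∑ j ∈ range m.succ,
            m.choose j • ((⇑d)^[m - j + 1] a * (⇑d)^[j] b)) +
          ∑ j ∈ range m.succ,
            m.choose j • ((⇑d)^[m - j] a * (⇑d)^[j + 1] b) := by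
        rw [map_sum]
        simp_rw [map_nsmul, Derivation.leibniz, smul_eq_mul,
          Function.iterate_succ_apply', smul_add, sum_add_distrib]
        rw [add_comm]
        congr 1
        exact sum_congr rfl fun j _ => by rw [mul_comm]
      _ = (∑ j ∈ range m.succ,
                m.choose j.succ • ((⇑d)^[m - j] a * (⇑d)^[j + 1] b)) +
              1 • ((⇑d)^[m + 1] a * (⇑d)^[0] b) +
            ∑ j ∈ range m.succ, m.choose j • ((⇑d)^[m - j] a * (⇑d)^[j + 1] b) :=
        ?_
      _ = ((∑ j ∈ range m.succ, m.choose j • ((⇑d)^[m - j] a * (⇑d)^[j + 1] b)) +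
              ∑ j ∈ range m.succ,
                m.choose j.succ • ((⇑d)^[m - j] a * (⇑d)^[j + 1] b)) +
            1 • ((⇑d)^[m + 1] a * (⇑d)^[0] b) := by
        rw [add_comm, add_assoc]
      _ = (∑ i ∈ range m.succ,
              (m + 1).choose (i + 1) • ((⇑d)^[m + 1 - (i + 1)] a * (⇑d)^[i + 1] b)) +
            1 • ((⇑d)^[m + 1] a * (⇑d)^[0] b) := by
        simp_rw [Nat.choose_succ_succ, Nat.succ_sub_succ, add_smul, sum_add_distrib]
      _ = ∑ j ∈ range m.succ.succ,
            m.succ.choose j • ((⇑d)^[m.succ - j] a * (⇑d)^[j] b) := by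
        rw [sum_range_succ' _ m.succ, Nat.choose_zero_right, tsub_zero]
    congr
    refine (sum_range_succ' _ _).trans (congr_arg₂ (· + ·) ?_ ?_)
    · rw [sum_range_succ, Nat.choose_succ_self, zero_smul, add_zero]
      refine sum_congr rfl fun j hj => ?_
      rw [mem_range] at hj
      congr
      omega
    · rw [Nat.choose_zero_right, tsub_zero]

/-- Iterates on a variable. -/
lemma aux_iterate_X (hX : ∀ i : Fin n, d (X i) = X i ^ 2) (i : Fin n) (m : ℕ) :
    (⇑d)^[m] (X i) = m.factorial • (X i : MvPolynomial (Fin n) k) ^ (m + 1) := by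
  induction m with
  | zero => simp
  | succ m IH =>
    rw [Function.iterate_succ_apply', IH, map_nsmul, Derivation.leibniz_pow, hX,
      Nat.factorial_succ]
    simp only [smul_smul, smul_eq_mul, Nat.add_sub_cancel]
    rw [← pow_add]
    rw [Nat.mul_comm]

variable (p : ℕ) [Fact p.Prime] [CharP k p]

lemma aux_nsmul_zero (m : ℕ) (hm : p ∣ m) (x : MvPolynomial (Fin n) k) :
    m • x = 0 := by
  rw [nsmul_eq_mul, (CharP.cast_eq_zero_iff (MvPolynomial (Fin n) k) p m).mpr hm, zero_mul]

/-- `d^[p] = 0` on the whole polynomial ring. -/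
lemma aux_iterate_p (hX : ∀ i : Fin n, d (X i) = X i ^ 2)
    (f : MvPolynomial (Fin n) k) : (⇑d)^[p] f = 0 := by
  have hp : p.Prime := Fact.out
  induction f using MvPolynomial.induction_on with
  | C a =>
      have h : d (MvPolynomial.C (σ := Fin n) a) = 0 := by
        rw [← MvPolynomial.algebraMap_eq]; exact d.map_algebraMap a
      obtain ⟨q, hq⟩ := Nat.exists_eq_succ_of_ne_zero hp.ne_zero
      rw [hq, Function.iterate_succ_apply, h, Function.iterate_fixed (map_zero d) q]
  | add f g hf hg =>
      have : ∀ x y : MvPolynomial (Fin n) k, (⇑d)^[p] (x + y) = (⇑d)^[p] x + (⇑d)^[p] y := by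
        intro x y
        have h2 := Derivation.coeFn_coe d
        have h1 := fun z => Module.End.pow_apply
          (d : MvPolynomial (Fin n) k →ₗ[k] MvPolynomial (Fin n) k) p z
        simp only [h2] at h1
        rw [← h1, ← h1, ← h1, map_add]
      rw [this, hf, hg, add_zero]
  | mul_X f i hf =>
      rw [aux_iterate_leibniz]
      refine Finset.sum_eq_zero fun j hj => ?_
      rw [mem_range, Nat.lt_succ_iff] at hj
      rcases eq_or_ne j 0 with rfl | hj0
      · rw [Nat.sub_zero, hf, zero_mul, smul_zero]
      rcases eq_or_ne j p with hjp | hjp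
      · rw [hjp, aux_iterate_X d hX,
          aux_nsmul_zero p _ (Nat.dvd_factorial hp.pos le_rfl), mul_zero, smul_zero]
      · have hdvd : p ∣ p.choose j := hp.dvd_choose_self hj0 (lt_of_le_of_ne hj hjp)
        exact aux_nsmul_zero p _ hdvd _

end Aux

theorem stmt_7 {k : Type*} [Field k] (p n : ℕ) [Fact p.Prime] [CharP k p]
    (d : Derivation k (MvPolynomial (Fin n) k) (MvPolynomial (Fin n) k))
    (hX : ∀ i : Fin n, d (X i) = X i ^ 2) :
    (∀ f ∈ symmetricSubalgebra (Fin n) k, d f ∈ symmetricSubalgebra (Fin n) k) ∧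
    (∀ f ∈ symmetricSubalgebra (Fin n) k, (⇑d)^[p] f = 0) := by
  constructor
  · intro f hf
    rw [mem_symmetricSubalgebra] at hf ⊢
    intro e
    rw [← aux_d_rename d hX e f, hf e]
  · intro f _
    exact aux_iterate_p d p hX f
end

section
/- In the nilHecke algebra NH_2 (generated by x_1, x_2, ψ with x_1 ψ − ψ x_2 = 1 = ψ x_1 − x_2 ψ, ψ^2 = 0, x_1 x_2 = x_2 x_1), the derivation ∂ given by ∂(x_i) = x_i^2 and ∂(ψ) = −x_1 ψ − ψ x_2 is well-defined, i.e., ∂ applied to each defining relation yields zero: ∂(ψ^2) = 0 holds as a consequence of the relations, and ∂(x_1 ψ − ψ x_2) = 0, ∂(ψ x_1 − x_2 ψ) = 0. -/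
/-- Well-definedness of the derivation `∂` on the nilHecke algebra `NH₂`:
in any ring containing elements `x₁, x₂, ψ` satisfying the defining relations
of `NH₂`, the formal Leibniz expansions of `∂` applied to each defining
relation (`ψ² = 0`, `x₁ψ − ψx₂ = 1`, `ψx₁ − x₂ψ = 1`) vanish, where
`∂(xᵢ) = xᵢ²` and `∂(ψ) = −x₁ψ − ψx₂`. -/
theorem stmt_10 {A : Type*} [Ring A] (x₁ x₂ ψ : A)
    (hcomm : x₁ * x₂ = x₂ * x₁)
    (hψsq : ψ * ψ = 0)
    (hrel1 : x₁ * ψ - ψ * x₂ = 1)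
    (hrel2 : ψ * x₁ - x₂ * ψ = 1) :
    ((-(x₁ * ψ) - ψ * x₂) * ψ + ψ * (-(x₁ * ψ) - ψ * x₂) = 0) ∧
    (x₁ ^ 2 * ψ + x₁ * (-(x₁ * ψ) - ψ * x₂)
        - ((-(x₁ * ψ) - ψ * x₂) * x₂ + ψ * x₂ ^ 2) = 0) ∧
    ((-(x₁ * ψ) - ψ * x₂) * x₁ + ψ * x₁ ^ 2
        - (x₂ ^ 2 * ψ + x₂ * (-(x₁ * ψ) - ψ * x₂)) = 0) := by
  have h1 : x₁ * ψ = 1 + ψ * x₂ := by rw [← hrel1]; noncomm_ring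
  have h2 : x₂ * ψ = ψ * x₁ - 1 := by rw [← hrel2]; noncomm_ring
  have hψ' : ∀ a : A, ψ * (ψ * a) = 0 := fun a => by rw [← mul_assoc, hψsq, zero_mul]
  have h1' : ∀ a : A, x₁ * (ψ * a) = a + ψ * (x₂ * a) := fun a => by
    rw [← mul_assoc, h1]; noncomm_ring
  have h2' : ∀ a : A, x₂ * (ψ * a) = ψ * (x₁ * a) - a := fun a => by
    rw [← mul_assoc, h2]; noncomm_ring
  have hc : ψ * (x₁ * x₂) = ψ * (x₂ * x₁) := by rw [hcomm]
  refine ⟨?_, ?_, ?_⟩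
  · noncomm_ring [h1, h2, hψ', hψsq, h1', h2', hc]
  · noncomm_ring [h1, h2, hψ', hψsq, h1', h2', hc]
  · noncomm_ring [h1, h2, hψ', hψsq, h1', h2', hc]
end

section
/- Let k be a field of characteristic p > 0 and let ∂ be the derivation on k[E_1, E_2] (polynomial ring in two variables, thought of as elementary symmetric functions) defined by ∂(E_1) = E_1^2 − 2E_2 and ∂(E_2) = E_1 E_2. Then ∂^p(E_1) = 0 and ∂^p(E_2) = 0, so ∂^p = 0 on k[E_1, E_2]. -/
open MvPolynomial

section Aux

open Finset Nat

variable {k : Type*} [CommRing k]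

/-- General Leibniz rule for iterates of a derivation on a commutative algebra. -/
theorem deriv_iterate_mul {A : Type*} [CommRing A] [Algebra k A]
    (d : Derivation k A A) (n : ℕ) (a b : A) :
    (⇑d)^[n] (a * b) =
      ∑ ij ∈ antidiagonal n, n.choose ij.1 • ((⇑d)^[ij.1] a * (⇑d)^[ij.2] b) := by
  induction n with
  | zero => simp
  | succ n ih =>
    rw [sum_antidiagonal_choose_succ_nsmul (fun i j => (⇑d)^[i] a * (⇑d)^[j] b) n]
    have key : ∀ i j : ℕ, d ((⇑d)^[i] a * (⇑d)^[j] b) =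
        (⇑d)^[i+1] a * (⇑d)^[j] b + (⇑d)^[i] a * (⇑d)^[j+1] b := by
      intro i j
      rw [d.leibniz, smul_eq_mul, smul_eq_mul, Function.iterate_succ_apply',
        Function.iterate_succ_apply']
      ring
    simp only [Function.iterate_succ_apply', ih, map_sum, map_nsmul, key, smul_add,
      sum_add_distrib]
    rw [add_comm]
    congr 1
    refine sum_congr rfl fun ⟨i, j⟩ hij ↦ ?_
    rw [n.choose_symm_of_eq_add (mem_antidiagonal.1 hij).symm]

theorem deriv_iterate_mul' {A : Type*} [CommRing A] [Algebra k A]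
    (d : Derivation k A A) (n : ℕ) (a b : A) :
    (⇑d)^[n] (a * b) =
      ∑ i ∈ range (n + 1), n.choose i • ((⇑d)^[i] a * (⇑d)^[n - i] b) := by
  rw [deriv_iterate_mul d n a b]
  exact sum_antidiagonal_eq_sum_range_succ (fun i j ↦ n.choose i • ((⇑d)^[i] a * (⇑d)^[j] b)) n

/-- Complete homogeneous symmetric polynomials in two variables, expressed in the
elementary symmetric polynomials `X 0 = e₁`, `X 1 = e₂`. -/
noncomputable def hsym (k : Type*) [CommRing k] : ℕ → MvPolynomial (Fin 2) k
  | 0 => 1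
  | 1 => X 0
  | (n+2) => X 0 * hsym k (n+1) - X 1 * hsym k n

variable (d : Derivation k (MvPolynomial (Fin 2) k) (MvPolynomial (Fin 2) k))
    (hE1 : d (X 0) = X 0 ^ 2 - 2 * X 1)
    (hE2 : d (X 1) = X 0 * X 1)

include hE1 hE2 in
theorem d_hsym : ∀ n : ℕ, d (hsym k n) = (n+1) • hsym k (n+1) - X 0 * hsym k n := by
  intro n
  induction n using Nat.strong_induction_on with
  | _ n ih =>
    match n with
    | 0 => simp [hsym]
    | 1 =>
      show d (hsym k 1) = 2 • hsym k 2 - X 0 * hsym k 1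
      simp only [hsym, hE1]
      ring
    | (n+2) =>
      have ih1 := ih (n+1) (by omega)
      have ih2 := ih n (by omega)
      show d (hsym k (n+2)) = (n+3) • hsym k (n+3) - X 0 * hsym k (n+2)
      have : hsym k (n+3) = X 0 * hsym k (n+2) - X 1 * hsym k (n+1) := rfl
      rw [this]
      show d (X 0 * hsym k (n+1) - X 1 * hsym k n) = _
      rw [map_sub, d.leibniz, d.leibniz, smul_eq_mul, smul_eq_mul, smul_eq_mul, smul_eq_mul,
        hE1, hE2, ih1, ih2]
      have e2 : hsym k (n+2) = X 0 * hsym k (n+1) - X 1 * hsym k n := rfl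
      rw [e2]
      push_cast [nsmul_eq_mul]
      ring

include hE1 hE2 in
theorem d_iter_E2 : ∀ n : ℕ, (⇑d)^[n] (X 1) = n.factorial • (X 1 * hsym k n) := by
  intro n
  induction n with
  | zero => simp [hsym]
  | succ n ih =>
    rw [Function.iterate_succ_apply', ih, Derivation.map_smul_of_tower, d.leibniz,
      smul_eq_mul, smul_eq_mul, hE2, d_hsym d hE1 hE2]
    simp only [Nat.factorial_succ]
    push_cast [nsmul_eq_mul]
    ring

include hE1 hE2 in
theorem d_iter_E1 : ∀ n : ℕ,
    (⇑d)^[n+1] (X 0) = (n+1).factorial • (hsym k (n+2) - X 1 * hsym k n) := by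
  intro n
  induction n with
  | zero =>
    have e2 : hsym k 2 = X 0 * hsym k 1 - X 1 * hsym k 0 := rfl
    rw [Function.iterate_one, hE1, e2]
    show _ = (1 : ℕ) • (X 0 * X 0 - X 1 * 1 - X 1 * 1)
    rw [one_smul]
    ring
  | succ n ih =>
    rw [Function.iterate_succ_apply', ih, Derivation.map_smul_of_tower, map_sub, d.leibniz,
      smul_eq_mul, smul_eq_mul, hE2, d_hsym d hE1 hE2, d_hsym d hE1 hE2]
    have e3 : hsym k (n+3) = X 0 * hsym k (n+2) - X 1 * hsym k (n+1) := rfl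
    rw [e3]
    simp only [Nat.factorial_succ]
    push_cast [nsmul_eq_mul]
    ring

end Aux

theorem stmt_13 {k : Type*} [Field k] (p : ℕ) [Fact p.Prime] [CharP k p]
    (d : Derivation k (MvPolynomial (Fin 2) k) (MvPolynomial (Fin 2) k))
    (hE1 : d (X 0) = X 0 ^ 2 - 2 * X 1)
    (hE2 : d (X 1) = X 0 * X 1) :
    (⇑d)^[p] (X 0) = 0 ∧ (⇑d)^[p] (X 1) = 0 ∧
      ∀ f : MvPolynomial (Fin 2) k, (⇑d)^[p] f = 0 := by
  have hp : p.Prime := Fact.out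
  have hzero : ∀ m : ℕ, (⇑d)^[m] (0 : MvPolynomial (Fin 2) k) = 0 := fun m =>
    Function.iterate_fixed (map_zero d) m
  have hadd : ∀ (m : ℕ) (x y : MvPolynomial (Fin 2) k),
      (⇑d)^[m] (x + y) = (⇑d)^[m] x + (⇑d)^[m] y := by
    intro m
    induction m with
    | zero => intro x y; simp
    | succ m ihm =>
      intro x y
      simp only [Function.iterate_succ_apply, map_add, ihm]
  have hpfac : ((Nat.factorial p : ℕ) : MvPolynomial (Fin 2) k) = 0 :=
    (CharP.cast_eq_zero_iff _ p _).2 (Nat.dvd_factorial hp.pos le_rfl)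
  have h1 : (⇑d)^[p] (X 0) = 0 := by
    obtain ⟨n, rfl⟩ : ∃ n, p = n + 1 := ⟨p - 1, (Nat.succ_pred_eq_of_pos hp.pos).symm⟩
    rw [d_iter_E1 d hE1 hE2, nsmul_eq_mul, hpfac, zero_mul]
  have h2 : (⇑d)^[p] (X 1) = 0 := by
    rw [d_iter_E2 d hE1 hE2, nsmul_eq_mul, hpfac, zero_mul]
  refine ⟨h1, h2, ?_⟩
  intro f
  induction f using MvPolynomial.induction_on with
  | C a =>
    obtain ⟨n, hn⟩ : ∃ n, p = n + 1 := ⟨p - 1, (Nat.succ_pred_eq_of_pos hp.pos).symm⟩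
    rw [hn, Function.iterate_succ_apply]
    have hc : d (C a : MvPolynomial (Fin 2) k) = 0 := by
      simp [MvPolynomial.algebraMap_eq]
    rw [hc, hzero]
  | add f g hf hg =>
    rw [hadd, hf, hg, add_zero]
  | mul_X f i hf =>
    have hXi : (⇑d)^[p] (X i : MvPolynomial (Fin 2) k) = 0 := by
      fin_cases i
      · exact h1
      · exact h2
    rw [deriv_iterate_mul' d p f (X i)]
    refine Finset.sum_eq_zero fun j hj => ?_
    rcases eq_or_ne j 0 with rfl | hj0
    · simp [hXi]
    rcases eq_or_ne j p with rfl | hjp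
    · simp [hf]
    have hjlt : j < p := by
      have := Finset.mem_range.1 hj; omega
    have hc0 : ((p.choose j : ℕ) : MvPolynomial (Fin 2) k) = 0 :=
      (CharP.cast_eq_zero_iff _ p _).2 (hp.dvd_choose_self hj0 hjlt)
    rw [nsmul_eq_mul, hc0, zero_mul]
end
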